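/- arXiv:1303.5486 — 2 statements merged into one kernel-verified Lean document; each statement's English description precedes it below -/
import Mathlib

section
/- Let F(n) be the free group with basis {x₁, …, x_n}. Then the augmentation ideal of ℤ[F(n)] (the kernel of the augmentation ε : ℤ[F(n)] → ℤ sending each group element to 1) is a free left ℤ[F(n)]-module with basis {x₁ − 1, …, x_n − 1}. -/
/-!
For a generator `a` of the free group `F`, the Fox derivative `∂ₐ : F → k[F]` is the crossed
homomorphism (`∂ₐ(gh) = ∂ₐ g + g ∂ₐ h`) with `∂ₐ x_b = δ_ab`; it exists because a crossed
homomorphism is the same as a section `g ↦ (∂ₐ g, g)` of the semidirect product `k[F] ⋊ F`,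
and such a section can be lifted from the generators. Extended linearly, `∂ₐ` sends
`u (x_b - 1)` to `δ_ab u`, so the `x_b - 1` are linearly independent; and
`u - ε(u) = ∑ₐ ∂ₐ(u) (xₐ - 1)` (on group elements both sides are crossed homomorphisms that
agree on generators), so they span the kernel of `ε`.
-/

open MonoidAlgebra

noncomputable section

/-- The augmentation `ℤ[F(n)] → ℤ`, the ring homomorphism sending every group
element to `1`. -/
def augF (n : ℕ) : MonoidAlgebra ℤ (FreeGroup (Fin n)) →+* ℤ :=
  (MonoidAlgebra.lift ℤ ℤ (FreeGroup (Fin n)) 1).toRingHom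

section CrossedHom

variable {G R M : Type*} [Group G] [Monoid R] [AddGroup M] [DistribMulAction R M]

def IsCrossedHom (ρ : G →* R) (f : G → M) : Prop :=
  ∀ g h, f (g * h) = f g + ρ g • f h

namespace IsCrossedHom

variable {ρ : G →* R} {f : G → M}

theorem map_one (hf : IsCrossedHom ρ f) : f 1 = 0 := by
  simpa using hf 1 1

theorem map_inv (hf : IsCrossedHom ρ f) (g : G) : f g⁻¹ = -(ρ g⁻¹ • f g) := by
  have h := hf g⁻¹ g
  rw [inv_mul_cancel, hf.map_one] at h
  exact eq_neg_of_add_eq_zero_left h.symm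

end IsCrossedHom

/-- The semidirect product `M ⋊ G` for the action of `G` through `ρ`; `f` is a crossed
homomorphism iff `g ↦ ⟨f g, g⟩` is a group homomorphism. -/
@[ext]
structure CrossedPair (ρ : G →* R) (M : Type*) where
  val : M
  elem : G

instance (ρ : G →* R) : Group (CrossedPair ρ M) where
  mul p q := ⟨p.val + ρ p.elem • q.val, p.elem * q.elem⟩
  one := ⟨0, 1⟩
  inv p := ⟨-(ρ p.elem⁻¹ • p.val), p.elem⁻¹⟩
  mul_assoc p q r := CrossedPair.ext
    (show p.val + ρ p.elem • q.val + ρ (p.elem * q.elem) • r.val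
        = p.val + ρ p.elem • (q.val + ρ q.elem • r.val) by
      rw [map_mul, mul_smul, smul_add, add_assoc])
    (mul_assoc p.elem q.elem r.elem)
  one_mul p := CrossedPair.ext (show 0 + ρ 1 • p.val = p.val by simp) (one_mul p.elem)
  mul_one p := CrossedPair.ext (show p.val + ρ p.elem • 0 = p.val by simp) (mul_one p.elem)
  inv_mul_cancel p := CrossedPair.ext
    (show -(ρ p.elem⁻¹ • p.val) + ρ p.elem⁻¹ • p.val = 0 by simp) (inv_mul_cancel p.elem)

theorem CrossedPair.mul_val {ρ : G →* R} (p q : CrossedPair ρ M) :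
    (p * q).val = p.val + ρ p.elem • q.val :=
  rfl

end CrossedHom

namespace FreeGroup

section CrossedLift

variable {α R M : Type*} [Monoid R] [AddGroup M] [DistribMulAction R M] (ρ : FreeGroup α →* R)

def crossedLift (v : α → M) (g : FreeGroup α) : M :=
  (lift (fun a => (⟨v a, of a⟩ : CrossedPair ρ M)) g).val

variable {ρ}

theorem elem_lift_crossedPair (v : α → M) (g : FreeGroup α) :
    (lift (fun a => (⟨v a, of a⟩ : CrossedPair ρ M)) g).elem = g := by
  let elemHom : CrossedPair ρ M →* FreeGroup α := ⟨⟨CrossedPair.elem, rfl⟩, fun _ _ => rfl⟩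
  suffices elemHom.comp (lift fun a => ⟨v a, of a⟩) = MonoidHom.id _ from
    DFunLike.congr_fun this g
  ext a
  simp [elemHom]

theorem isCrossedHom_crossedLift (v : α → M) : IsCrossedHom ρ (crossedLift ρ v) := by
  intro g h
  rw [crossedLift, MonoidHom.map_mul, CrossedPair.mul_val, elem_lift_crossedPair]
  rfl

@[simp]
theorem crossedLift_of (v : α → M) (a : α) : crossedLift ρ v (of a) = v a := by
  simp [crossedLift]

theorem crossedHom_ext {f f' : FreeGroup α → M} (hf : IsCrossedHom ρ f)
    (hf' : IsCrossedHom ρ f') (h : ∀ a, f (of a) = f' (of a)) : f = f' := by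
  funext g
  induction g using FreeGroup.induction_on with
  | C1 => rw [hf.map_one, hf'.map_one]
  | of a => exact h a
  | inv_of g hg => rw [hf.map_inv, hf'.map_inv, hg]
  | mul g g' hg hg' => rw [hf, hf', hg, hg']

end CrossedLift

section FoxDerivative

variable {k α : Type*} [CommRing k]

section

variable [DecidableEq α]

def foxDerivative (a : α) : k[FreeGroup α] →ₗ[k] k[FreeGroup α] :=
  (MonoidAlgebra.basis (FreeGroup α) k).constr k
    (crossedLift (MonoidAlgebra.of k (FreeGroup α)) (Pi.single a 1))

theorem foxDerivative_of (a : α) (g : FreeGroup α) :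
    foxDerivative a (MonoidAlgebra.of k _ g)
      = crossedLift (MonoidAlgebra.of k (FreeGroup α)) (Pi.single a 1) g :=
  (MonoidAlgebra.basis _ k).constr_basis k _ g

theorem foxDerivative_mul_of (a : α) (x : k[FreeGroup α]) (g : FreeGroup α) :
    foxDerivative a (x * MonoidAlgebra.of k _ g)
      = foxDerivative a x + x * foxDerivative a (MonoidAlgebra.of k _ g) := by
  induction x using MonoidAlgebra.induction_on with
  | of h =>
    rw [← _root_.map_mul, foxDerivative_of, foxDerivative_of, foxDerivative_of,
      isCrossedHom_crossedLift, smul_eq_mul]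
  | add x y hx hy =>
    rw [add_mul, map_add, map_add, hx, hy, add_mul]
    abel
  | smul c x hx => rw [smul_mul_assoc, map_smul, hx, map_smul, smul_add, smul_mul_assoc]

theorem foxDerivative_mul_of_sub_one (a b : α) (x : k[FreeGroup α]) :
    foxDerivative a (x * (MonoidAlgebra.of k _ (of b) - 1))
      = (Pi.single b x : α → k[FreeGroup α]) a := by
  rw [mul_sub, mul_one, map_sub, foxDerivative_mul_of, add_sub_cancel_left, foxDerivative_of,
    crossedLift_of, Pi.single_apply, Pi.single_apply, mul_ite, mul_one, mul_zero]
  simp only [eq_comm]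

theorem of_sub_one_eq_sum_foxDerivative_mul [Fintype α] (g : FreeGroup α) :
    MonoidAlgebra.of k _ g - 1
      = ∑ a, foxDerivative a (MonoidAlgebra.of k _ g) * (MonoidAlgebra.of k _ (of a) - 1) := by
  simp only [foxDerivative_of]
  refine congrFun (crossedHom_ext (ρ := MonoidAlgebra.of k (FreeGroup α))
    (f := fun g => MonoidAlgebra.of k _ g - 1)
    (f' := fun g => ∑ a, crossedLift _ (Pi.single a 1) g * (MonoidAlgebra.of k _ (of a) - 1))
    ?_ ?_ fun b => ?_) g
  · intro g h
    simp only [_root_.map_mul, smul_eq_mul]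
    noncomm_ring
  · intro g h
    simp only [isCrossedHom_crossedLift _ g h, smul_eq_mul, add_mul, mul_assoc,
      Finset.sum_add_distrib, Finset.mul_sum]
  · simp [Pi.single_apply]

theorem sub_lift_one_smul_eq_sum_foxDerivative_mul [Fintype α] (x : k[FreeGroup α]) :
    x - MonoidAlgebra.lift k k (FreeGroup α) 1 x • 1
      = ∑ a, foxDerivative a x * (MonoidAlgebra.of k _ (of a) - 1) := by
  induction x using MonoidAlgebra.induction_on with
  | of g => rw [lift_of, MonoidHom.one_apply, one_smul, of_sub_one_eq_sum_foxDerivative_mul]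
  | add x y hx hy =>
    rw [map_add, add_smul, add_sub_add_comm, hx, hy, ← Finset.sum_add_distrib]
    simp only [map_add, add_mul]
  | smul c x hx =>
    rw [map_smul, smul_eq_mul, mul_smul, ← smul_sub, hx, Finset.smul_sum]
    simp only [map_smul, smul_mul_assoc]

end

theorem linearIndependent_of_sub_one :
    LinearIndependent k[FreeGroup α] fun a : α => MonoidAlgebra.of k _ (of a) - 1 := by
  classical
  rw [linearIndependent_iff']
  intro s c hc b hb
  have := congrArg (foxDerivative b) hc
  simpa only [map_sum, smul_eq_mul, foxDerivative_mul_of_sub_one, Finset.sum_pi_single, if_pos hb,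
    map_zero] using this

theorem ker_lift_one_eq_span [Fintype α] :
    RingHom.ker (MonoidAlgebra.lift k k (FreeGroup α) 1) =
      Ideal.span (Set.range fun a : α => MonoidAlgebra.of k _ (of a) - 1) := by
  classical
  refine le_antisymm (fun x hx => ?_) (Ideal.span_le.2 ?_)
  · have hx : x = ∑ a, foxDerivative a x * (MonoidAlgebra.of k _ (of a) - 1) := by
      rw [← sub_lift_one_smul_eq_sum_foxDerivative_mul, RingHom.mem_ker.1 hx, zero_smul, sub_zero]
    rw [hx]
    exact Ideal.sum_mem _ fun a _ => Ideal.mul_mem_left _ _ (Ideal.subset_span ⟨a, rfl⟩)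
  · rintro _ ⟨a, rfl⟩
    simp [RingHom.mem_ker]

variable (k α) in
def augmentationIdealBasis [Fintype α] :
    Module.Basis α k[FreeGroup α] (RingHom.ker (MonoidAlgebra.lift k k (FreeGroup α) 1)) :=
  (Module.Basis.span linearIndependent_of_sub_one).map
    (LinearEquiv.ofEq _ _ ker_lift_one_eq_span.symm)

@[simp]
theorem coe_augmentationIdealBasis [Fintype α] (a : α) :
    (augmentationIdealBasis k α a : k[FreeGroup α]) = MonoidAlgebra.of k _ (of a) - 1 :=
  congrArg Subtype.val (Module.Basis.span_apply linearIndependent_of_sub_one a)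

end FoxDerivative

end FreeGroup

/-- Statement 4: the augmentation ideal of `ℤ[F(n)]` is a free left module with
basis `{xᵢ − 1}`. -/
theorem augmentationIdeal_free_basis (n : ℕ) :
    ∃ B : Module.Basis (Fin n) (MonoidAlgebra ℤ (FreeGroup (Fin n))) (RingHom.ker (augF n)),
      ∀ i : Fin n,
        (B i : MonoidAlgebra ℤ (FreeGroup (Fin n)))
          = MonoidAlgebra.of ℤ (FreeGroup (Fin n)) (FreeGroup.of i) - 1 := by
  exact ⟨FreeGroup.augmentationIdealBasis ℤ (Fin n), FreeGroup.coe_augmentationIdealBasis⟩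

end
end

section
/- Let π be a group of cohomological dimension at most 2 and let C_* be a nonnegatively graded chain complex of projective left ℤ[π]-modules with H₀(C_*) ≅ ℤ (the trivial module) and H₁(C_*) = 0. Let D_* be the chain complex with D₀ = C₀, D₁ = C₁, D₂ = Im(∂₂ : C₂ → C₁) (with differential the inclusion D₂ → C₁ and the differential of C in degree 1), and D_q = 0 for q > 2. Then: (1) the sequence 0 → D₂ → D₁ → D₀ → ℤ → 0 is a projective resolution of ℤ, i.e. D₂ is a projective ℤ[π]-module and the sequence is exact; and (2) C_* is isomorphic, as a chain complex of ℤ[π]-modules, to a direct sum D_* ⊕ C′_*, where C′_* is a chain complex with C′₀ = C′₁ = 0. -/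
/-!
Both `C₁ → C₀ → ℤ → 0` and the given resolution `Q₁ → Q₀ → ℤ → 0` present `ℤ` by projective
modules. Dimension shifting along `0 → ker → P → image → 0` twice shows that `ℤ` has projective
dimension `< 3` iff the second syzygy is projective; the resolution `Q` gives the former, so
`D₂ = Im ∂₂ = ker ∂₁` is projective. Hence `∂₂ : C₂ ↠ D₂` has a section `s`, so
`C₂ = s(D₂) ⊕ ker ∂₂`, and `T = (C₀, C₁, s(D₂), 0, …)`, `S = (0, 0, ker ∂₂, C₃, C₄, …)` are
complementary subcomplexes with `T ≅ D`.
-/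

open MonoidAlgebra

noncomputable section

/-- The integral group ring `ℤ[π]`. -/
abbrev GR (π : Type) [Group π] : Type := MonoidAlgebra ℤ π

variable {π : Type} [Group π]

/-- `ℤ` as the trivial `ℤ[π]`-module (via the augmentation). -/
def TrivInt (π : Type) [Group π] : Type := ℤ

instance : AddCommGroup (TrivInt π) := inferInstanceAs (AddCommGroup ℤ)

/-- The augmentation `ℤ[π] → ℤ`. -/
def augZ (π : Type) [Group π] : GR π →+* ℤ :=
  (MonoidAlgebra.lift ℤ ℤ π 1).toRingHom

instance : Module (GR π) (TrivInt π) := Module.compHom ℤ (augZ π)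

/-- A projective resolution of length (at most) 2 of a module `M`; the existence of
such a resolution of the trivial module `ℤ` says exactly that the group has
cohomological dimension at most 2. -/
structure ProjRes2 (R : Type) [Ring R] (M : Type) [AddCommGroup M] [Module R M] :
    Type 1 where
  Q0 : Type
  Q1 : Type
  Q2 : Type
  [acg0 : AddCommGroup Q0]
  [acg1 : AddCommGroup Q1]
  [acg2 : AddCommGroup Q2]
  [mod0 : Module R Q0]
  [mod1 : Module R Q1]
  [mod2 : Module R Q2]
  proj0 : Module.Projective R Q0
  proj1 : Module.Projective R Q1
  proj2 : Module.Projective R Q2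
  d0 : Q1 →ₗ[R] Q0
  d1 : Q2 →ₗ[R] Q1
  eps : Q0 →ₗ[R] M
  inj : Function.Injective d1
  ex1 : LinearMap.ker d0 = LinearMap.range d1
  ex0 : LinearMap.ker eps = LinearMap.range d0
  sur : Function.Surjective eps

open CategoryTheory LinearMap

section DimensionShifting

universe u v

variable {R : Type u} [Ring R] [Small.{v} R] {P₀ P₁ M : Type v}
  [AddCommGroup P₀] [Module R P₀] [AddCommGroup P₁] [Module R P₁] [AddCommGroup M] [Module R M]

theorem hasProjectiveDimensionLT_iff_ker [Module.Projective R P₀] {g : P₀ →ₗ[R] M}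
    (hg : Function.Surjective g) (n : ℕ) :
    HasProjectiveDimensionLT (ModuleCat.of R M) (n + 2) ↔
      HasProjectiveDimensionLT (ModuleCat.of R (ker g)) (n + 1) :=
  (shortExact_shortComplexKer hg).hasProjectiveDimensionLT_X₃_iff n
    ((IsProjective.iff_projective P₀).mp inferInstance)

theorem hasProjectiveDimensionLT_three_iff_projective_ker [Module.Projective R P₀]
    [Module.Projective R P₁] {f : P₁ →ₗ[R] P₀} {g : P₀ →ₗ[R] M} (hg : Function.Surjective g)
    (hfg : ker g = range f) :
    HasProjectiveDimensionLT (ModuleCat.of R M) 3 ↔ Module.Projective R (ker f) := by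
  rw [hasProjectiveDimensionLT_iff_ker hg 1, hfg,
    hasProjectiveDimensionLT_iff_ker f.surjective_rangeRestrict 0, ker_rangeRestrict,
    IsProjective.iff_projective]
  exact projective_iff_hasProjectiveDimensionLT_one.symm

end DimensionShifting

namespace ProjRes2

attribute [local instance] acg0 acg1 acg2 mod0 mod1 mod2 proj0 proj1 proj2

theorem hasProjectiveDimensionLT {R M : Type} [Ring R] [AddCommGroup M] [Module R M]
    (Q : ProjRes2 R M) : HasProjectiveDimensionLT (ModuleCat.of R M) 3 := by
  rw [hasProjectiveDimensionLT_three_iff_projective_ker Q.sur Q.ex0, Q.ex1]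
  exact .of_equiv' (LinearEquiv.ofInjective Q.d1 Q.inj)

end ProjRes2

section Splitting

variable {R : Type*} [Ring R]

theorem LinearMap.isCompl_range_ker_of_comp_eq_id {M N : Type*} [AddCommGroup M] [Module R M]
    [AddCommGroup N] [Module R N] {f : M →ₗ[R] N} {s : N →ₗ[R] M} (h : f ∘ₗ s = id) :
    IsCompl (range s) (ker f) := by
  have hs : ∀ y, f (s y) = y := LinearMap.congr_fun h
  have hproj : IsProj (range s) (s ∘ₗ f) :=
    ⟨fun x ↦ mem_range_self s (f x), by rintro _ ⟨y, rfl⟩; simp [hs]⟩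
  have hker : ker (s ∘ₗ f) = ker f := by
    rw [ker_comp, ker_eq_bot_of_inverse h, Submodule.comap_bot]
  exact hker ▸ hproj.isCompl

variable {C : ℕ → Type*} [∀ i, AddCommGroup (C i)] [∀ i, Module R (C i)]

theorem exists_isCompl_subcomplexes_of_projective_range (dd : ∀ i, C (i + 1) →ₗ[R] C i)
    (hcomplex : ∀ i, (dd i).comp (dd (i + 1)) = 0) [Module.Projective R (range (dd 1))] :
    ∃ (T S : ∀ i, Submodule R (C i)),
      (∀ i, IsCompl (T i) (S i)) ∧
      (∀ i, Submodule.map (dd i) (T (i + 1)) ≤ T i) ∧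
      (∀ i, Submodule.map (dd i) (S (i + 1)) ≤ S i) ∧
      S 0 = ⊥ ∧ S 1 = ⊥ ∧
      T 0 = ⊤ ∧ T 1 = ⊤ ∧ (∀ i, 2 < i → T i = ⊥) ∧
      Function.Injective ((dd 1).domRestrict (T 2)) ∧
      Submodule.map (dd 1) (T 2) = range (dd 1) := by
  obtain ⟨s, hs⟩ := Module.projective_lifting_property (dd 1).rangeRestrict id
    (dd 1).surjective_rangeRestrict
  have hcompl : IsCompl (range s) (ker (dd 1)) :=
    ker_rangeRestrict (dd 1) ▸ isCompl_range_ker_of_comp_eq_id hs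
  refine ⟨fun | 0 => ⊤ | 1 => ⊤ | 2 => range s | _ + 3 => ⊥,
    fun | 0 => ⊥ | 1 => ⊥ | 2 => ker (dd 1) | _ + 3 => ⊤,
    fun | 0 | 1 => isCompl_top_bot | 2 => hcompl | _ + 3 => isCompl_bot_top,
    fun | 0 | 1 => le_top | 2 | _ + 3 => by simp,
    fun | 0 => by simp | 1 => ?_ | 2 => ?_ | _ + 3 => le_top,
    rfl, rfl, rfl, rfl, fun | _ + 3, _ => rfl, ?_, ?_⟩
  · rw [Submodule.map_le_iff_le_comap, Submodule.comap_bot]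
  · rw [Submodule.map_top, range_le_ker_iff]
    exact hcomplex 1
  · rw [← ker_eq_bot, ker_domRestrict, ← Submodule.disjoint_iff_comap_eq_bot]
    exact hcompl.disjoint
  · have hds : dd 1 ∘ₗ s = (range (dd 1)).subtype :=
      ext fun y ↦ congrArg Subtype.val (LinearMap.congr_fun hs y)
    rw [← range_comp, congrArg range hds, Submodule.range_subtype]

end Splitting

/-- Statement 19. -/
theorem chain_complex_splitting
    (π : Type) [Group π]
    -- c.d.π ≤ 2: the trivial module ℤ has projective dimension at most 2:
    (hcd : Nonempty (ProjRes2 (GR π) (TrivInt π)))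
    -- a nonnegatively graded chain complex C_* of projective modules:
    (C : ℕ → Type) [∀ i, AddCommGroup (C i)] [∀ i, Module (GR π) (C i)]
    (hproj : ∀ i, Module.Projective (GR π) (C i))
    (dd : ∀ i, C (i + 1) →ₗ[GR π] C i)
    (hcomplex : ∀ i, (dd i).comp (dd (i + 1)) = 0)
    -- H₀(C_*) ≅ ℤ, witnessed by an augmentation ε : C₀ → ℤ:
    (ε : C 0 →ₗ[GR π] TrivInt π)
    (hsur : Function.Surjective ε)
    (hH0 : LinearMap.ker ε = LinearMap.range (dd 0))
    -- H₁(C_*) = 0: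
    (hH1 : LinearMap.ker (dd 0) = LinearMap.range (dd 1)) :
    -- (1) 0 → D₂ → D₁ → D₀ → ℤ → 0 is a projective resolution of ℤ,
    -- where D₂ = Im(∂₂) ⊆ C₁, D₁ = C₁, D₀ = C₀:
    (Module.Projective (GR π) (LinearMap.range (dd 1)) ∧
     Function.Injective ((LinearMap.range (dd 1)).subtype) ∧
     LinearMap.ker (dd 0) = LinearMap.range (dd 1) ∧
     LinearMap.ker ε = LinearMap.range (dd 0) ∧
     Function.Surjective ε) ∧
    -- (2) C_* ≅ D_* ⊕ C′_* as chain complexes, with C′₀ = C′₁ = 0: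
    (∃ (T S : ∀ i, Submodule (GR π) (C i)),
      -- internal direct sum decomposition C_i = T_i ⊕ S_i:
      (∀ i, IsCompl (T i) (S i)) ∧
      -- T_* and S_* are subcomplexes:
      (∀ i, Submodule.map (dd i) (T (i + 1)) ≤ T i) ∧
      (∀ i, Submodule.map (dd i) (S (i + 1)) ≤ S i) ∧
      -- C′ := S has S₀ = S₁ = 0:
      S 0 = ⊥ ∧ S 1 = ⊥ ∧
      -- T_* is a copy of D_*: it is all of C in degrees 0 and 1, vanishes in
      -- degrees > 2, and in degree 2 it maps isomorphically onto D₂ = Im(∂₂)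
      -- under ∂₂ (so that T_* ≅ D_* as chain complexes):
      T 0 = ⊤ ∧ T 1 = ⊤ ∧ (∀ i, 2 < i → T i = ⊥) ∧
      Function.Injective ((dd 1).domRestrict (T 2)) ∧
      Submodule.map (dd 1) (T 2) = LinearMap.range (dd 1)) := by
  have := hproj 0
  have := hproj 1
  have hD₂ : Module.Projective (GR π) (range (dd 1)) := by
    rw [← hH1, ← hasProjectiveDimensionLT_three_iff_projective_ker hsur hH0]
    exact hcd.some.hasProjectiveDimensionLT
  exact ⟨⟨hD₂, Submodule.injective_subtype _, hH1, hH0, hsur⟩,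
    exists_isCompl_subcomplexes_of_projective_range dd hcomplex⟩

end
end
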